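/- Let γ, ρ, ε > 0 and v ∈ ℝ with v ≠ 0, and consider φ(x) = γ·log(1 + |x|/ε) + (ρ/2)(x − v)². Any nonzero stationary point x of φ with the same sign as v and 0 < |x| ≤ |v| satisfies |x| = r·|v|, where r solves the quadratic |v|·r² − (|v| − ε)·r + (γ/ρ − ε·|v|)/|v| = 0, i.e. r = r^± = (|v| − ε ± √Δ)/(2|v|) with Δ = (|v| + ε)² − 4γ/ρ; in particular, if Δ < 0 then φ has no stationary point in (0, |v|] of the form r·|v|, and x* = 0 is the minimizer of φ. -/

import Mathlib

private lemma pade_log_aux (u : ℝ) (hu : 0 ≤ u) : 2*u/(2+u) ≤ Real.log (1+u) := by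
  set f : ℝ → ℝ := fun s => Real.log (1+s) - 2*s/(2+s) with hf
  have hder : ∀ s : ℝ, 0 ≤ s → HasDerivAt f (s^2/((1+s)*(2+s)^2)) s := by
    intro s hs
    have h1 : HasDerivAt (fun y : ℝ => 1+y) 1 s := by
      simpa using (hasDerivAt_id s).const_add (1:ℝ)
    have hne : (1:ℝ)+s ≠ 0 := by positivity
    have h2 : HasDerivAt (fun y : ℝ => Real.log (1+y)) (1/(1+s)) s := h1.log hne
    have h3 : HasDerivAt (fun y : ℝ => 2*y) 2 s := by
      simpa using (hasDerivAt_id s).const_mul (2:ℝ)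
    have h4 : HasDerivAt (fun y : ℝ => 2+y) 1 s := by
      simpa using (hasDerivAt_id s).const_add (2:ℝ)
    have hne2 : (2:ℝ)+s ≠ 0 := by positivity
    have h5 := h3.div h4 hne2
    have h6 := h2.sub h5
    refine h6.congr_deriv ?_
    field_simp
    ring
  have hmono : MonotoneOn f (Set.Ici 0) := by
    apply monotoneOn_of_deriv_nonneg (convex_Ici 0)
    · exact fun s hs => (hder s hs).continuousAt.continuousWithinAt
    · intro s hs
      rw [interior_Ici] at hs
      exact (hder s hs.le).differentiableAt.differentiableWithinAt
    · intro s hs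
      rw [interior_Ici] at hs
      rw [(hder s hs.le).deriv]
      have hs' : (0:ℝ) < s := hs
      exact le_of_lt (div_pos (by positivity) (mul_pos (by linarith) (by positivity)))
  have h0 : f 0 = 0 := by simp [hf]
  have := hmono Set.self_mem_Ici hu hu
  rw [h0] at this
  simpa [hf] using this

private lemma stat_eq_aux (γ ρ ε v : ℝ) (hρ : 0 < ρ) (hε : 0 < ε)
    (φ : ℝ → ℝ) (hφ : ∀ x, φ x = γ * Real.log (1 + |x| / ε) + (ρ / 2) * (x - v) ^ 2)
    (x : ℝ) (hx0 : x ≠ 0) (hxv : 0 < x * v) (hd : HasDerivAt φ 0 x) :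
    γ + ρ * (|x| - |v|) * (ε + |x|) = 0 := by
  rcases hx0.lt_or_gt with hx | hx
  · have hvneg : v < 0 := by
      rcases lt_or_ge v 0 with h | h
      · exact h
      · exfalso; nlinarith
    have h1 : HasDerivAt (fun y : ℝ => 1 - y/ε) (-(1/ε)) x := by
      simpa using ((hasDerivAt_id x).div_const ε).const_sub (1:ℝ)
    have hpos : (0:ℝ) < 1 - x/ε := by
      have : x/ε < 0 := div_neg_of_neg_of_pos hx hε
      linarith
    have h2 : HasDerivAt (fun y : ℝ => Real.log (1 - y/ε)) (-(1/ε)/(1 - x/ε)) x :=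
      h1.log (ne_of_gt hpos)
    have h4 : HasDerivAt (fun y : ℝ => (y - v)^2) (2 * (x - v)^1 * 1) x :=
      ((hasDerivAt_id x).sub_const v).pow 2
    have h5 : HasDerivAt (fun y : ℝ => γ * Real.log (1 - y/ε) + (ρ/2) * (y - v)^2)
        (γ * (-(1/ε)/(1 - x/ε)) + (ρ/2) * (2 * (x - v)^1 * 1)) x :=
      (h2.const_mul γ).add (h4.const_mul (ρ/2))
    have hev : φ =ᶠ[nhds x] (fun y : ℝ => γ * Real.log (1 - y/ε) + (ρ/2) * (y - v)^2) := by
      filter_upwards [eventually_lt_nhds hx] with y hy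
      rw [hφ y, abs_of_neg hy]
      ring_nf
    have h6 : HasDerivAt φ (γ * (-(1/ε)/(1 - x/ε)) + (ρ/2) * (2 * (x - v)^1 * 1)) x :=
      h5.congr_of_eventuallyEq hev
    have h0 := hd.unique h6
    rw [abs_of_neg hx, abs_of_neg hvneg]
    have hne : ε - x ≠ 0 := by linarith
    field_simp at h0
    linear_combination h0
  · have hvpos : 0 < v := by
      rcases lt_or_ge 0 v with h | h
      · exact h
      · exfalso; nlinarith
    have h1 : HasDerivAt (fun y : ℝ => 1 + y/ε) (1/ε) x := by
      simpa using ((hasDerivAt_id x).div_const ε).const_add (1:ℝ)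
    have hpos : (0:ℝ) < 1 + x/ε := by
      have : 0 < x/ε := div_pos hx hε
      linarith
    have h2 : HasDerivAt (fun y : ℝ => Real.log (1 + y/ε)) ((1/ε)/(1 + x/ε)) x :=
      h1.log (ne_of_gt hpos)
    have h4 : HasDerivAt (fun y : ℝ => (y - v)^2) (2 * (x - v)^1 * 1) x :=
      ((hasDerivAt_id x).sub_const v).pow 2
    have h5 : HasDerivAt (fun y : ℝ => γ * Real.log (1 + y/ε) + (ρ/2) * (y - v)^2)
        (γ * ((1/ε)/(1 + x/ε)) + (ρ/2) * (2 * (x - v)^1 * 1)) x :=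
      (h2.const_mul γ).add (h4.const_mul (ρ/2))
    have hev : φ =ᶠ[nhds x] (fun y : ℝ => γ * Real.log (1 + y/ε) + (ρ/2) * (y - v)^2) := by
      filter_upwards [eventually_gt_nhds hx] with y hy
      rw [hφ y, abs_of_pos hy]
    have h6 : HasDerivAt φ (γ * ((1/ε)/(1 + x/ε)) + (ρ/2) * (2 * (x - v)^1 * 1)) x :=
      h5.congr_of_eventuallyEq hev
    have h0 := hd.unique h6
    rw [abs_of_pos hx, abs_of_pos hvpos]
    have hne : ε + x ≠ 0 := by linarith
    field_simp at h0
    linear_combination (-1)*h0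

private lemma quad_helper_aux (γ ρ ε w t Δ : ℝ) (hρ : 0 < ρ) (hw : 0 < w)
    (hΔ : Δ = (w + ε) ^ 2 - 4 * γ / ρ)
    (heq : γ + ρ * (t - w) * (ε + t) = 0) :
    ∃ r : ℝ, t = r * w ∧
      w * r ^ 2 - (w - ε) * r + (γ / ρ - ε * w) / w = 0 ∧
      (0 ≤ Δ → r = (w - ε + Real.sqrt Δ) / (2 * w) ∨
               r = (w - ε - Real.sqrt Δ) / (2 * w)) := by
  have hw0 : w ≠ 0 := ne_of_gt hw
  have hρ0 : ρ ≠ 0 := ne_of_gt hρ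
  refine ⟨t / w, by field_simp, ?_, ?_⟩
  · have key : w * (t/w) ^ 2 - (w - ε) * (t/w) + (γ / ρ - ε * w) / w
        = (γ + ρ * (t - w) * (ε + t)) / (ρ * w) := by
      field_simp
      ring
    rw [key, heq, zero_div]
  · intro hΔ0
    have hs : Real.sqrt Δ ^ 2 = Δ := Real.sq_sqrt hΔ0
    have hΔ' : ρ * Δ = ρ * (w + ε) ^ 2 - 4 * γ := by
      rw [hΔ]; field_simp
    have hfac : (2 * t - (w - ε) - Real.sqrt Δ) * (2 * t - (w - ε) + Real.sqrt Δ) * ρ = 0 := by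
      linear_combination 4 * heq - ρ * hs - hΔ'
    rcases mul_eq_zero.mp hfac with h | h
    · rcases mul_eq_zero.mp h with h | h
      · left
        rw [div_eq_div_iff hw0 (by positivity)]
        linear_combination w * h
      · right
        rw [div_eq_div_iff hw0 (by positivity)]
        linear_combination w * h
    · exact absurd h hρ0

/-- Scalar sum-of-logs shrinkage: for `φ(x) = γ log(1 + |x|/ε) + (ρ/2)(x − v)²` with
`v ≠ 0`, any nonzero stationary point with the same sign as `v` and `0 < |x| ≤ |v|`
is of the form `|x| = r |v|` with `r` a root of the quadratic
`|v| r² − (|v| − ε) r + (γ/ρ − ε|v|)/|v| = 0` (whose roots are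
`r^± = (|v| − ε ± √Δ)/(2|v|)` with `Δ = (|v| + ε)² − 4γ/ρ`); if `Δ < 0` there is no
such stationary point and `x⋆ = 0` is the minimizer. -/
theorem sum_of_logs_shrinkage
    (γ ρ ε v : ℝ) (hγ : 0 < γ) (hρ : 0 < ρ) (hε : 0 < ε) (hv : v ≠ 0)
    (φ : ℝ → ℝ) (hφ : ∀ x, φ x = γ * Real.log (1 + |x| / ε) + (ρ / 2) * (x - v) ^ 2)
    (Δ : ℝ) (hΔ : Δ = (|v| + ε) ^ 2 - 4 * γ / ρ) :
    (∀ x : ℝ, x ≠ 0 → 0 < x * v → |x| ≤ |v| → HasDerivAt φ 0 x →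
      ∃ r : ℝ, |x| = r * |v| ∧
        |v| * r ^ 2 - (|v| - ε) * r + (γ / ρ - ε * |v|) / |v| = 0 ∧
        (0 ≤ Δ → r = (|v| - ε + Real.sqrt Δ) / (2 * |v|) ∨
                 r = (|v| - ε - Real.sqrt Δ) / (2 * |v|))) ∧
    (Δ < 0 →
      (¬ ∃ x : ℝ, x ≠ 0 ∧ 0 < x * v ∧ |x| ≤ |v| ∧ HasDerivAt φ 0 x) ∧
      ∀ x, φ 0 ≤ φ x) := by
  have hw : 0 < |v| := abs_pos.mpr hv
  constructor
  · intro x hx0 hxv _ hd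
    exact quad_helper_aux γ ρ ε |v| |x| Δ hρ hw hΔ
      (stat_eq_aux γ ρ ε v hρ hε φ hφ x hx0 hxv hd)
  · intro hΔneg
    have hΔ' : ρ * Δ = ρ * (|v| + ε) ^ 2 - 4 * γ := by
      rw [hΔ]; field_simp
    constructor
    · rintro ⟨x, hx0, hxv, _, hd⟩
      have heq := stat_eq_aux γ ρ ε v hρ hε φ hφ x hx0 hxv hd
      have ht : 0 ≤ |x| := abs_nonneg x
      have hkey : ρ * Δ = ρ * (2 * |x| - |v| + ε) ^ 2 := by
        linear_combination hΔ' - 4 * heq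
      nlinarith [sq_nonneg (2 * |x| - |v| + ε), mul_pos hρ (show (0:ℝ) < -Δ by linarith)]
    · intro x
      rw [hφ 0, hφ x]
      set t : ℝ := |x| with htdef
      set w : ℝ := |v| with hwdef
      have ht : 0 ≤ t := abs_nonneg x
      have hlog : 2*t/(2*ε+t) ≤ Real.log (1 + t/ε) := by
        have := pade_log_aux (t/ε) (by positivity)
        have hrw : 2*(t/ε)/(2+t/ε) = 2*t/(2*ε+t) := by
          rw [div_eq_div_iff (by positivity) (by positivity)]
          field_simp
        rwa [hrw] at this
      have h2 : γ * (2*t/(2*ε+t)) ≤ γ * Real.log (1 + t/ε) :=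
        mul_le_mul_of_nonneg_left hlog hγ.le
      have hA : ρ * ((2*w - t) * (2*ε + t)) ≤ 4 * γ := by
        have h1 : (2*w - t) * (2*ε + t) ≤ (w + ε)^2 := by
          nlinarith [sq_nonneg (w - ε - t)]
        have h2' : ρ * ((2*w - t) * (2*ε + t)) ≤ ρ * (w + ε)^2 :=
          mul_le_mul_of_nonneg_left h1 hρ.le
        have h3 : ρ * (w + ε)^2 < 4 * γ := by
          nlinarith [mul_pos hρ (show (0:ℝ) < -Δ by linarith)]
        linarith
      have h3 : (ρ/2) * (2*t*w - t^2) ≤ γ * (2*t/(2*ε+t)) := by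
        rw [← mul_div_assoc, le_div_iff₀ (by positivity)]
        nlinarith [mul_le_mul_of_nonneg_left hA (show (0:ℝ) ≤ t/2 by positivity)]
      have hkey : (ρ/2) * (2*t*w - t^2) ≤ γ * Real.log (1 + t/ε) := h3.trans h2
      have habs : x * v ≤ t * w := by
        rw [htdef, hwdef, ← abs_mul]
        exact le_abs_self _
      have hx2 : x^2 = t^2 := (sq_abs x).symm
      have hv2 : v^2 = w^2 := (sq_abs v).symm
      simp only [abs_zero, zero_div, add_zero, Real.log_one, mul_zero, zero_add]
      nlinarith [hkey, mul_nonneg hρ.le (sub_nonneg.mpr habs)]
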